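/- Let A_1, A_2 be Hermitian matrices on a finite-dimensional complex inner product space with A_1 ⪰ I and A_2 ≻ I, let y be a vector, let κ > 0, and define B(t) := f_t(A_1) + f_{1−t}(A_2) and h(t) := −2κ ⟨B(t)^{−1} y, y⟩ for t ∈ (0,1). Then h is differentiable on (0,1) and lim_{t↗1} h'(t) = −κ ⟨ log[ (A_2 − I)(A_2 + I)^{−1} ] y, y ⟩. -/

import Mathlib

open Matrix Filter Set
open scoped ComplexOrder

noncomputable section

variable {n : Type*} [Fintype n] [DecidableEq n]

/-- `f_t(A)` via the continuous functional calculus, where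
`f_t(s) = ((s+1)^t + (s−1)^t)/((s+1)^t − (s−1)^t)`. -/
def fPowMat (t : ℝ) (A : Matrix n n ℂ) : Matrix n n ℂ :=
  cfc (fun s : ℝ => ((s + 1) ^ t + (s - 1) ^ t) / ((s + 1) ^ t - (s - 1) ^ t)) A

/-- Logarithm of a positive definite matrix via the continuous functional calculus. -/
def mlog (A : Matrix n n ℂ) : Matrix n n ℂ := cfc Real.log A

/-- The displacement contribution `h(t) = −2κ ⟨(f_t(A₁) + f_{1−t}(A₂))⁻¹ y, y⟩`. -/
def hDisp (A₁ A₂ : Matrix n n ℂ) (y : n → ℂ) (κ : ℝ) (t : ℝ) : ℝ :=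
  -2 * κ * (star y ⬝ᵥ ((fPowMat t A₁ + fPowMat (1 - t) A₂)⁻¹ *ᵥ y)).re

/-! `B(t)` and `B'(t)` are sums of two functional calculi, so everything reduces to the scalar
function `fPow t s = f_t(s)` on the spectra. As `t ↗ 1`, `f_t(s)` stays bounded for `s ≥ 1`, while
for `s > 1` both `(1 - t) f_{1-t}(s)` and `-(1 - t)² (∂ₜ f)_{1-t}(s)` tend to `2 / logRatio s`,
because the denominator of `f_u(s)` is `u logRatio s + o(u)` as `u ↘ 0`. Hence `(1 - t) B(t)` and
`(1 - t)² B'(t)` have the same limit `G = 2 (logRatio A₂)⁻¹`, and since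
`h'(t) = 2κ ⟨B⁻¹ B' B⁻¹ y, y⟩` the powers of `1 - t` cancel:
`h'(t) → 2κ ⟨G⁻¹ y, y⟩ = κ ⟨logRatio A₂ y, y⟩ = -κ ⟨log ((A₂ - 1)(A₂ + 1)⁻¹) y, y⟩`. -/

open Real Topology

theorem Real.hasDerivAt_const_rpow_of_nonneg {a t : ℝ} (ha : 0 ≤ a) (ht : 0 < t) :
    HasDerivAt (fun u : ℝ => a ^ u) (a ^ t * log a) t := by
  rcases ha.eq_or_lt with rfl | ha
  · rw [zero_rpow ht.ne', zero_mul]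
    refine (hasDerivAt_const t (0 : ℝ)).congr_of_eventuallyEq ?_
    filter_upwards [eventually_ne_nhds ht.ne'] with u hu using zero_rpow hu
  · exact (hasStrictDerivAt_const_rpow ha t).hasDerivAt

theorem tendsto_one_sub_nhdsLT_one : Tendsto (fun t : ℝ => 1 - t) (𝓝[<] 1) (𝓝[>] 0) := by
  refine tendsto_nhdsWithin_of_tendsto_nhds_of_eventually_within _ ?_ ?_
  · have h : ContinuousAt (fun t : ℝ => 1 - t) 1 := by fun_prop
    simpa using h.tendsto.mono_left nhdsWithin_le_nhds
  · filter_upwards [self_mem_nhdsWithin] with t (ht : t < 1)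
    exact sub_pos.mpr ht

def fPow (t s : ℝ) : ℝ := ((s + 1) ^ t + (s - 1) ^ t) / ((s + 1) ^ t - (s - 1) ^ t)

def logRatio (s : ℝ) : ℝ := log (s + 1) - log (s - 1)

def fPowDeriv (t s : ℝ) : ℝ :=
  -(2 * (s + 1) ^ t * (s - 1) ^ t * logRatio s) / ((s + 1) ^ t - (s - 1) ^ t) ^ 2

section scalar

variable {s t : ℝ}

theorem logRatio_pos (hs : 1 < s) : 0 < logRatio s :=
  sub_pos.mpr (log_lt_log (by linarith) (by linarith))

theorem rpow_sub_one_lt_rpow_add_one (hs : 1 ≤ s) (ht : 0 < t) : (s - 1) ^ t < (s + 1) ^ t :=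
  rpow_lt_rpow (by linarith) (by linarith) ht

theorem one_le_fPow (hs : 1 ≤ s) (ht : 0 < t) : 1 ≤ fPow t s := by
  have := rpow_sub_one_lt_rpow_add_one hs ht
  rw [fPow, one_le_div (by linarith)]
  linarith [rpow_nonneg (by linarith : 0 ≤ s - 1) t]

theorem hasDerivAt_fPow (hs : 1 ≤ s) (ht : 0 < t) :
    HasDerivAt (fPow · s) (fPowDeriv t s) t := by
  have ha := hasDerivAt_const_rpow_of_nonneg (by linarith : 0 ≤ s + 1) ht
  have hb := hasDerivAt_const_rpow_of_nonneg (by linarith : 0 ≤ s - 1) ht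
  have hd := (sub_pos.mpr (rpow_sub_one_lt_rpow_add_one hs ht)).ne'
  refine ((ha.fun_add hb).div (ha.fun_sub hb) hd).congr_deriv ?_
  rw [fPowDeriv, logRatio]
  ring

theorem continuousAt_fPowDeriv (hs : 1 ≤ s) (ht : 0 < t) : ContinuousAt (fPowDeriv · s) t := by
  have ha := (hasDerivAt_const_rpow_of_nonneg (by linarith : 0 ≤ s + 1) ht).continuousAt
  have hb := (hasDerivAt_const_rpow_of_nonneg (by linarith : 0 ≤ s - 1) ht).continuousAt
  have hd := pow_ne_zero 2 (sub_pos.mpr (rpow_sub_one_lt_rpow_add_one hs ht)).ne'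
  exact ((((ha.const_mul 2).mul hb).mul_const _).neg).div ((ha.sub hb).pow 2) hd

theorem tendsto_one_sub_mul_fPow (hs : 1 ≤ s) :
    Tendsto (fun t => (1 - t) * fPow t s) (𝓝[<] 1) (𝓝 0) := by
  have := (hasDerivAt_fPow hs one_pos).continuousAt
  have h : ContinuousAt (fun t => (1 - t) * fPow t s) 1 := by fun_prop
  simpa using h.tendsto.mono_left nhdsWithin_le_nhds

theorem tendsto_one_sub_sq_mul_fPowDeriv (hs : 1 ≤ s) :
    Tendsto (fun t => (1 - t) ^ 2 * fPowDeriv t s) (𝓝[<] 1) (𝓝 0) := by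
  have := continuousAt_fPowDeriv hs one_pos
  have h : ContinuousAt (fun t => (1 - t) ^ 2 * fPowDeriv t s) 1 := by fun_prop
  simpa using h.tendsto.mono_left nhdsWithin_le_nhds

theorem tendsto_div_rpow_sub_rpow (hs : 1 < s) :
    Tendsto (fun u => u / ((s + 1) ^ u - (s - 1) ^ u)) (𝓝[>] 0) (𝓝 (logRatio s)⁻¹) := by
  have ha := (hasStrictDerivAt_const_rpow (by linarith : 0 < s + 1) 0).hasDerivAt
  have hb := (hasStrictDerivAt_const_rpow (by linarith : 0 < s - 1) 0).hasDerivAt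
  have hslope := (ha.fun_sub hb).tendsto_slope_zero_right.inv₀ ?_
  · simpa [logRatio, mul_comm, div_eq_mul_inv] using hslope
  · simpa [logRatio] using (logRatio_pos hs).ne'

theorem tendsto_mul_fPow (hs : 1 < s) :
    Tendsto (fun u => u * fPow u s) (𝓝[>] 0) (𝓝 (2 / logRatio s)) := by
  have hnum : Tendsto (fun u : ℝ => (s + 1) ^ u + (s - 1) ^ u) (𝓝[>] 0) (𝓝 2) := by
    have h : ContinuousAt (fun u : ℝ => (s + 1) ^ u + (s - 1) ^ u) 0 :=
      (continuousAt_const_rpow (by linarith)).add (continuousAt_const_rpow (by linarith))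
    simpa [one_add_one_eq_two] using h.tendsto.mono_left nhdsWithin_le_nhds
  refine ((hnum.mul (tendsto_div_rpow_sub_rpow hs)).congr fun u => ?_)
  rw [fPow]; ring

theorem tendsto_sq_mul_neg_fPowDeriv (hs : 1 < s) :
    Tendsto (fun u => u ^ 2 * -fPowDeriv u s) (𝓝[>] 0) (𝓝 (2 / logRatio s)) := by
  have hnum : Tendsto (fun u : ℝ => 2 * (s + 1) ^ u * (s - 1) ^ u * logRatio s) (𝓝[>] 0)
      (𝓝 (2 * logRatio s)) := by
    have h : ContinuousAt (fun u : ℝ => 2 * (s + 1) ^ u * (s - 1) ^ u * logRatio s) 0 :=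
      (((continuousAt_const_rpow (by linarith)).const_mul 2).mul
        (continuousAt_const_rpow (by linarith))).mul_const _
    simpa using h.tendsto.mono_left nhdsWithin_le_nhds
  have h := hnum.mul ((tendsto_div_rpow_sub_rpow hs).pow 2)
  rw [show 2 * logRatio s * (logRatio s)⁻¹ ^ 2 = 2 / logRatio s by
    field_simp [(logRatio_pos hs).ne']] at h
  refine h.congr fun u => ?_
  rw [fPowDeriv, div_pow]; ring

end scalar

open scoped MatrixOrder

namespace Matrix

variable {𝕜 : Type*} [RCLike 𝕜] {A : Matrix n n 𝕜}

theorem IsHermitian.cfc_eq_sum_smul (hA : A.IsHermitian) (f : ℝ → ℝ) :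
    cfc f A = ∑ i, f (hA.eigenvalues i) •
      Unitary.conjStarAlgAut ℝ _ hA.eigenvectorUnitary (single i i 1) := by
  rw [hA.cfc_eq, IsHermitian.cfc, ← sum_single_eq_diagonal, map_sum]
  refine Finset.sum_congr rfl fun i _ => ?_
  rw [← map_smul, smul_single, Function.comp_apply, Function.comp_apply,
    RCLike.real_smul_eq_coe_mul, mul_one]
  rfl

theorem IsHermitian.tendsto_cfc {ι : Type*} {l : Filter ι} {g : ι → ℝ → ℝ} {c : ℝ → ℝ}
    (hA : A.IsHermitian) (h : ∀ s ∈ spectrum ℝ A, Tendsto (g · s) l (𝓝 (c s))) :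
    Tendsto (fun i => cfc (g i) A) l (𝓝 (cfc c A)) := by
  simp_rw [hA.cfc_eq_sum_smul]
  exact tendsto_finsetSum _ fun k _ =>
    (h _ (hA.eigenvalues_mem_spectrum_real k)).smul_const _

theorem IsHermitian.posDef_cfc (hA : A.IsHermitian) {f : ℝ → ℝ}
    (hf : ∀ s ∈ spectrum ℝ A, 0 < f s) : (cfc f A).PosDef := by
  rw [← isStrictlyPositive_iff_posDef]
  exact (cfc_isStrictlyPositive_iff f A (A.finite_real_spectrum.continuousOn f)).2 hf

theorem one_le_of_mem_spectrum (hA : (A - 1).PosSemidef) {s : ℝ} (hs : s ∈ spectrum ℝ A) :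
    1 ≤ s := by
  have hA' : IsSelfAdjoint A := by
    simpa using (hA.isHermitian.add isHermitian_one).isSelfAdjoint
  have : algebraMap ℝ (Matrix n n 𝕜) 1 ≤ A := by simpa [Matrix.le_iff] using hA
  exact (algebraMap_le_iff_le_spectrum hA').1 this s hs

theorem one_lt_of_mem_spectrum (hA : (A - 1).PosDef) {s : ℝ} (hs : s ∈ spectrum ℝ A) :
    1 < s := by
  have h1 : s - 1 ∈ spectrum ℝ (A - algebraMap ℝ _ 1) := by
    rw [← spectrum.sub_singleton_eq]; exact Set.sub_mem_sub hs rfl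
  have := hA.isStrictlyPositive.spectrum_pos (by simpa using h1)
  linarith

theorem inv_smul_of_ne_zero {B : Matrix n n 𝕜} (hB : IsUnit B) {c : ℝ} (hc : c ≠ 0) :
    (c • B)⁻¹ = c⁻¹ • B⁻¹ := by
  refine inv_eq_left_inv ?_
  rw [smul_mul_smul_comm, inv_mul_cancel₀ hc, one_smul,
    nonsing_inv_mul _ ((isUnit_iff_isUnit_det B).mp hB)]

theorem tendsto_inv_mul_mul_inv {ι : Type*} {l : Filter ι} {B B' : ι → Matrix n n 𝕜}
    {c : ι → ℝ} {G G' : Matrix n n 𝕜} (hG : IsUnit G) (hB : ∀ᶠ i in l, IsUnit (B i))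
    (hc : ∀ᶠ i in l, c i ≠ 0) (hcB : Tendsto (fun i => c i • B i) l (𝓝 G))
    (hcB' : Tendsto (fun i => c i ^ 2 • B' i) l (𝓝 G')) :
    Tendsto (fun i => (B i)⁻¹ * B' i * (B i)⁻¹) l (𝓝 (G⁻¹ * G' * G⁻¹)) := by
  have hinv : ContinuousAt Inv.inv G := continuousAt_matrix_inv G <| by
    simpa [Ring.inverse_eq_inv'] using
      continuousAt_inv₀ ((isUnit_iff_isUnit_det G).mp hG).ne_zero
  refine (((hinv.tendsto.comp hcB).mul hcB').mul (hinv.tendsto.comp hcB)).congr' ?_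
  filter_upwards [hB, hc] with i hBi hci
  simp only [Function.comp_apply, inv_smul_of_ne_zero hBi hci, mul_smul_comm, smul_mul_assoc,
    smul_smul]
  rw [show (c i)⁻¹ * (c i ^ 2 * (c i)⁻¹) = 1 by field_simp, one_smul]

section normed

-- Derivatives need a norm on matrices; every norm induces the product topology, so any will do.
attribute [local instance] Matrix.linftyOpNormedAddCommGroup Matrix.linftyOpNormedSpace
  Matrix.linftyOpNormedRing Matrix.linftyOpNormedAlgebra

theorem IsHermitian.hasDerivAt_cfc {g : ℝ → ℝ → ℝ} {g' : ℝ → ℝ} {t : ℝ}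
    (hA : A.IsHermitian) (h : ∀ s ∈ spectrum ℝ A, HasDerivAt (g · s) (g' s) t) :
    HasDerivAt (fun t => cfc (g t) A) (cfc g' A) t := by
  simp_rw [hA.cfc_eq_sum_smul]
  exact HasDerivAt.fun_sum fun k _ =>
    (h _ (hA.eigenvalues_mem_spectrum_real k)).smul_const _

theorem _root_.HasDerivAt.matrix_inv {B : ℝ → Matrix n n 𝕜} {B' : Matrix n n 𝕜} {t : ℝ}
    (hB : HasDerivAt B B' t) (hBt : IsUnit (B t)) :
    HasDerivAt (fun t => (B t)⁻¹) (-((B t)⁻¹ * B' * (B t)⁻¹)) t := by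
  obtain ⟨u, hu⟩ := hBt
  have hinv : (↑u⁻¹ : Matrix n n 𝕜) = Ring.inverse (B t) := by rw [← hu, Ring.inverse_unit]
  have h := hasFDerivAt_ringInverse (𝕜 := ℝ) u
  rw [hu, hinv] at h
  simp_rw [nonsing_inv_eq_ringInverse]
  have h2 := h.comp_hasDerivAt t hB
  simp only [_root_.neg_apply, ContinuousLinearMap.mulLeftRight_apply] at h2
  exact h2

end normed

end Matrix

def reDotProductMulVec (y : n → ℂ) : Matrix n n ℂ →ₗ[ℝ] ℝ where
  toFun M := (star y ⬝ᵥ (M *ᵥ y)).re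
  map_add' M N := by rw [add_mulVec, dotProduct_add, Complex.add_re]
  map_smul' c M := by rw [smul_mulVec, dotProduct_smul, Complex.smul_re]; rfl

theorem mlog_sub_one_mul_add_one_inv {A : Matrix n n ℂ} (hA : A.IsHermitian)
    (h : ∀ s ∈ spectrum ℝ A, 1 < s) :
    mlog ((A - 1) * (A + 1)⁻¹) = -cfc logRatio A := by
  have hc : ∀ f : ℝ → ℝ, ContinuousOn f (spectrum ℝ A) := A.finite_real_spectrum.continuousOn
  have hsub : A - 1 = cfc (fun s : ℝ => s - 1) A := by
    rw [cfc_sub (f := fun s => s) (g := fun _ => 1) A (hc _) (hc _), cfc_id' ℝ A,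
      cfc_const_one ℝ A]
  have hinv : (A + 1)⁻¹ = cfc (fun s : ℝ => (s + 1)⁻¹) A := by
    have hadd : A + 1 = cfc (fun s : ℝ => s + 1) A := by
      rw [cfc_add_const (1 : ℝ) (fun s => s) A (hc _), cfc_id' ℝ A, map_one]
    refine inv_eq_right_inv ?_
    rw [hadd, ← cfc_mul _ _ A (hc _) (hc _), ← cfc_const_one ℝ A]
    exact cfc_congr fun s hs => mul_inv_cancel₀ (by linarith [h s hs])
  rw [hsub, hinv, ← cfc_mul _ _ A (hc _) (hc _), mlog,
    ← cfc_comp' log (fun s : ℝ => (s - 1) * (s + 1)⁻¹) A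
      ((A.finite_real_spectrum.image _).continuousOn log) (hc _), ← cfc_neg]
  refine cfc_congr fun s hs => ?_
  have := h s hs
  rw [log_mul (by linarith) (inv_ne_zero (by linarith)), log_inv, logRatio]
  ring

variable {A₁ A₂ : Matrix n n ℂ} {t : ℝ}

theorem fPowMat_eq_cfc (A : Matrix n n ℂ) : fPowMat t A = cfc (fPow t) A := rfl

def dispMat (A₁ A₂ : Matrix n n ℂ) (t : ℝ) : Matrix n n ℂ := fPowMat t A₁ + fPowMat (1 - t) A₂

def dispMatDeriv (A₁ A₂ : Matrix n n ℂ) (t : ℝ) : Matrix n n ℂ :=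
  cfc (fPowDeriv t) A₁ + cfc (fun s => -fPowDeriv (1 - t) s) A₂

theorem isUnit_dispMat (hA₁ : A₁.IsHermitian) (hA₂ : A₂.IsHermitian)
    (h₁ : ∀ s ∈ spectrum ℝ A₁, 1 ≤ s) (h₂ : ∀ s ∈ spectrum ℝ A₂, 1 ≤ s) (ht : t ∈ Ioo 0 1) :
    IsUnit (dispMat A₁ A₂ t) :=
  ((hA₁.posDef_cfc fun s hs => one_pos.trans_le (one_le_fPow (h₁ s hs) ht.1)).add
    (hA₂.posDef_cfc fun s hs =>
      one_pos.trans_le (one_le_fPow (h₂ s hs) (sub_pos.2 ht.2)))).isUnit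

theorem tendsto_smul_dispMat (hA₁ : A₁.IsHermitian) (hA₂ : A₂.IsHermitian)
    (h₁ : ∀ s ∈ spectrum ℝ A₁, 1 ≤ s) (h₂ : ∀ s ∈ spectrum ℝ A₂, 1 < s) :
    Tendsto (fun t => (1 - t) • dispMat A₁ A₂ t) (𝓝[<] 1)
      (𝓝 (cfc (fun s => 2 / logRatio s) A₂)) := by
  have e : (fun t => (1 - t) • dispMat A₁ A₂ t) = fun t =>
      cfc (fun s => (1 - t) * fPow t s) A₁ + cfc (fun s => (1 - t) * fPow (1 - t) s) A₂ := by
    funext t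
    rw [dispMat, fPowMat_eq_cfc, fPowMat_eq_cfc, smul_add,
      cfc_const_mul _ _ A₁ (A₁.finite_real_spectrum.continuousOn _),
      cfc_const_mul _ _ A₂ (A₂.finite_real_spectrum.continuousOn _)]
  rw [e]
  simpa using (hA₁.tendsto_cfc fun s hs => tendsto_one_sub_mul_fPow (h₁ s hs)).add
    (hA₂.tendsto_cfc fun s hs => (tendsto_mul_fPow (h₂ s hs)).comp tendsto_one_sub_nhdsLT_one)

theorem tendsto_sq_smul_dispMatDeriv (hA₁ : A₁.IsHermitian) (hA₂ : A₂.IsHermitian)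
    (h₁ : ∀ s ∈ spectrum ℝ A₁, 1 ≤ s) (h₂ : ∀ s ∈ spectrum ℝ A₂, 1 < s) :
    Tendsto (fun t => (1 - t) ^ 2 • dispMatDeriv A₁ A₂ t) (𝓝[<] 1)
      (𝓝 (cfc (fun s => 2 / logRatio s) A₂)) := by
  have e : (fun t => (1 - t) ^ 2 • dispMatDeriv A₁ A₂ t) = fun t =>
      cfc (fun s => (1 - t) ^ 2 * fPowDeriv t s) A₁ +
        cfc (fun s => (1 - t) ^ 2 * -fPowDeriv (1 - t) s) A₂ := by
    funext t
    rw [dispMatDeriv, smul_add, cfc_const_mul _ _ A₁ (A₁.finite_real_spectrum.continuousOn _),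
      cfc_const_mul _ _ A₂ (A₂.finite_real_spectrum.continuousOn _)]
  rw [e]
  simpa using (hA₁.tendsto_cfc fun s hs => tendsto_one_sub_sq_mul_fPowDeriv (h₁ s hs)).add
    (hA₂.tendsto_cfc fun s hs =>
      (tendsto_sq_mul_neg_fPowDeriv (h₂ s hs)).comp tendsto_one_sub_nhdsLT_one)

theorem inv_cfc_two_div_logRatio {A : Matrix n n ℂ} (hA : A.IsHermitian)
    (h : ∀ s ∈ spectrum ℝ A, 1 < s) :
    (cfc (fun s => 2 / logRatio s) A)⁻¹ = (2⁻¹ : ℝ) • cfc logRatio A := by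
  refine inv_eq_right_inv ?_
  have hc : ∀ f : ℝ → ℝ, ContinuousOn f (spectrum ℝ A) := A.finite_real_spectrum.continuousOn
  rw [← cfc_const_mul _ _ A (hc _), ← cfc_mul _ _ A (hc _) (hc _), ← cfc_const_one ℝ A]
  exact cfc_congr fun s hs => by field_simp [(logRatio_pos (h s hs)).ne']

theorem tendsto_dispMat_inv_mul_deriv_mul_inv (hA₁ : A₁.IsHermitian) (hA₂ : A₂.IsHermitian)
    (h₁ : ∀ s ∈ spectrum ℝ A₁, 1 ≤ s) (h₂ : ∀ s ∈ spectrum ℝ A₂, 1 < s) :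
    Tendsto (fun t => (dispMat A₁ A₂ t)⁻¹ * dispMatDeriv A₁ A₂ t * (dispMat A₁ A₂ t)⁻¹)
      (𝓝[<] 1) (𝓝 ((2⁻¹ : ℝ) • cfc logRatio A₂)) := by
  have hG := (hA₂.posDef_cfc fun s hs => div_pos two_pos (logRatio_pos (h₂ s hs))).isUnit
  have hIoo : ∀ᶠ t in 𝓝[<] (1 : ℝ), t ∈ Ioo 0 1 := Ioo_mem_nhdsLT one_pos
  have h := tendsto_inv_mul_mul_inv hG
    (hIoo.mono fun t ht => isUnit_dispMat hA₁ hA₂ h₁ (fun s hs => (h₂ s hs).le) ht)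
    (hIoo.mono fun t ht => (sub_pos.2 ht.2).ne') (tendsto_smul_dispMat hA₁ hA₂ h₁ h₂)
    (tendsto_sq_smul_dispMatDeriv hA₁ hA₂ h₁ h₂)
  rwa [nonsing_inv_mul _ ((isUnit_iff_isUnit_det _).mp hG), one_mul,
    inv_cfc_two_div_logRatio hA₂ h₂] at h

section normed

attribute [local instance] Matrix.linftyOpNormedAddCommGroup Matrix.linftyOpNormedSpace
  Matrix.linftyOpNormedRing Matrix.linftyOpNormedAlgebra

theorem hasDerivAt_dispMat (hA₁ : A₁.IsHermitian) (hA₂ : A₂.IsHermitian)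
    (h₁ : ∀ s ∈ spectrum ℝ A₁, 1 ≤ s) (h₂ : ∀ s ∈ spectrum ℝ A₂, 1 ≤ s) (ht : t ∈ Ioo 0 1) :
    HasDerivAt (dispMat A₁ A₂) (dispMatDeriv A₁ A₂ t) t :=
  (hA₁.hasDerivAt_cfc fun s hs => hasDerivAt_fPow (h₁ s hs) ht.1).add
    (hA₂.hasDerivAt_cfc (g := fun t s => fPow (1 - t) s) fun s hs =>
      (hasDerivAt_fPow (h₂ s hs) (sub_pos.2 ht.2)).comp_const_sub 1 t)

theorem hasDerivAt_hDisp (y : n → ℂ) (κ : ℝ) (hA₁ : A₁.IsHermitian) (hA₂ : A₂.IsHermitian)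
    (h₁ : ∀ s ∈ spectrum ℝ A₁, 1 ≤ s) (h₂ : ∀ s ∈ spectrum ℝ A₂, 1 ≤ s) (ht : t ∈ Ioo 0 1) :
    HasDerivAt (hDisp A₁ A₂ y κ) (2 * κ * reDotProductMulVec y
      ((dispMat A₁ A₂ t)⁻¹ * dispMatDeriv A₁ A₂ t * (dispMat A₁ A₂ t)⁻¹)) t := by
  have hinv := (hasDerivAt_dispMat hA₁ hA₂ h₁ h₂ ht).matrix_inv (isUnit_dispMat hA₁ hA₂ h₁ h₂ ht)
  refine (((reDotProductMulVec y).toContinuousLinearMap.hasFDerivAt.comp_hasDerivAt t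
    hinv).const_mul (-2 * κ)).congr_deriv ?_
  change -2 * κ * reDotProductMulVec y (-_) = _
  rw [map_neg]
  ring

end normed

theorem hDisp_deriv_limit_general
    (A₁ A₂ : Matrix n n ℂ) (hA₁ : (A₁ - 1).PosSemidef) (hA₂ : (A₂ - 1).PosDef)
    (y : n → ℂ) (κ : ℝ) :
    ∃ D : ℝ → ℝ,
      (∀ t ∈ Set.Ioo (0 : ℝ) 1, HasDerivAt (hDisp A₁ A₂ y κ) (D t) t) ∧
      Tendsto D (nhdsWithin 1 (Set.Iio 1))
        (nhds (-κ * (star y ⬝ᵥ (mlog ((A₂ - 1) * (A₂ + 1)⁻¹) *ᵥ y)).re)) := by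
  have hA₁h : A₁.IsHermitian := by simpa using hA₁.isHermitian.add isHermitian_one
  have hA₂h : A₂.IsHermitian := by simpa using hA₂.isHermitian.add isHermitian_one
  have h₁ : ∀ s ∈ spectrum ℝ A₁, 1 ≤ s := fun s hs => one_le_of_mem_spectrum hA₁ hs
  have h₂ : ∀ s ∈ spectrum ℝ A₂, 1 < s := fun s hs => one_lt_of_mem_spectrum hA₂ hs
  refine ⟨fun t => 2 * κ * reDotProductMulVec y
    ((dispMat A₁ A₂ t)⁻¹ * dispMatDeriv A₁ A₂ t * (dispMat A₁ A₂ t)⁻¹),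
    fun t ht => hasDerivAt_hDisp y κ hA₁h hA₂h h₁ (fun s hs => (h₂ s hs).le) ht, ?_⟩
  have hval : -κ * (star y ⬝ᵥ (mlog ((A₂ - 1) * (A₂ + 1)⁻¹) *ᵥ y)).re =
      2 * κ * reDotProductMulVec y ((2⁻¹ : ℝ) • cfc logRatio A₂) := by
    change -κ * reDotProductMulVec y _ = _
    rw [mlog_sub_one_mul_add_one_inv hA₂h h₂, map_neg, map_smul, smul_eq_mul]
    ring
  rw [hval]
  exact (((reDotProductMulVec y).continuous_of_finiteDimensional.tendsto _).comp
    (tendsto_dispMat_inv_mul_deriv_mul_inv hA₁h hA₂h h₁ h₂)).const_mul (2 * κ)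

/-- **Limit of the derivative of the displacement term.**  For Hermitian `A₁ ⪰ I`, `A₂ ≻ I`,
`y` a vector and `κ > 0`, `h(t) = −2κ⟨B(t)⁻¹ y, y⟩` with `B(t) = f_t(A₁) + f_{1−t}(A₂)` is
differentiable on `(0,1)` and `h'(t) → −κ⟨log[(A₂−I)(A₂+I)⁻¹] y, y⟩` as `t ↗ 1`. -/
theorem hDisp_deriv_limit
    (A₁ A₂ : Matrix n n ℂ) (hA₁ : (A₁ - 1).PosSemidef) (hA₂ : (A₂ - 1).PosDef)
    (y : n → ℂ) (κ : ℝ) (hκ : 0 < κ) :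
    ∃ D : ℝ → ℝ,
      (∀ t ∈ Set.Ioo (0 : ℝ) 1, HasDerivAt (hDisp A₁ A₂ y κ) (D t) t) ∧
      Tendsto D (nhdsWithin 1 (Set.Iio 1))
        (nhds (-κ * (star y ⬝ᵥ (mlog ((A₂ - 1) * (A₂ + 1)⁻¹) *ᵥ y)).re)) :=
  hDisp_deriv_limit_general A₁ A₂ hA₁ hA₂ y κ
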